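/- arXiv:2105.04728 — 2 statements merged into one kernel-verified Lean document; each statement's English description precedes it below -/
import Mathlib

section
/- For every π ≥ 1, every d ∈ D, and every t ∈ [T], the outputs of pCR-PRM(π) satisfy max_{k∈[t]} d_k − max_{k∈[t]} (d_k − δ_k(π,d)) ≥ σ(d^t)/π; that is, at every time slot t the peak reduction achieved so far by pCR-PRM(π) is at least a 1/π fraction of the offline optimal reduction under the reference profile d^t. -/
/-!
Write `M_k` for the prefix maximum of `d` up to slot `k` and `σ_k = σ(d^k)`. By definition of the
algorithm, `d_k - δ_k ≤ M_k - σ_k / π`. For `k ≤ t` the profile `d^t` dominates `d^k` and has peak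
`M_t` instead of `M_k`; truncating an offline-feasible discharge for `d^t` to `d^k` shows
`σ_t - σ_k ≤ M_t - M_k`, and since `M_k ≤ M_t` and `π ≥ 1` this gives
`M_k - σ_k / π ≤ M_t - σ_t / π`. Taking the maximum over `k ≤ t` proves the claim.
-/

open Finset MeasureTheory

noncomputable section

/-- A discharging vector `δ` is feasible for demand profile `d` (with capacity `c`
and per-slot limit `dmax`). -/
def Feasible {T : ℕ} (c dmax : ℝ) (d δ : Fin T → ℝ) : Prop :=
  (∑ t, δ t) ≤ c ∧ ∀ t, 0 ≤ δ t ∧ δ t ≤ min dmax (d t)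

/-- Peak-demand reduction `R(d, δ)`. -/
noncomputable def Red {T : ℕ} (d δ : Fin T → ℝ) : ℝ :=
  (⨆ t, d t) - ⨆ t, (d t - δ t)

/-- Offline optimal peak-demand reduction `σ(d)`. -/
noncomputable def offOpt {T : ℕ} (c dmax : ℝ) (d : Fin T → ℝ) : ℝ :=
  sSup {r | ∃ δ : Fin T → ℝ, Feasible c dmax d δ ∧ r = Red d δ}

/-- Prefix maximum `max_{k ∈ [t]} d_k`. -/
noncomputable def prefMax {T : ℕ} (d : Fin T → ℝ) (t : Fin T) : ℝ :=
  ⨆ k : {k : Fin T // k ≤ t}, d k.1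

/-- The uncertainty set `D`: all profiles with entries in `[dlo, dhi]`. -/
def inD {T : ℕ} (dlo dhi : ℝ) (d : Fin T → ℝ) : Prop :=
  ∀ t, dlo ≤ d t ∧ d t ≤ dhi

/-- Reference profile `d^t`: observed demands up to slot `t`, lowest demand `dlo` afterwards. -/
def ref {T : ℕ} (dlo : ℝ) (d : Fin T → ℝ) (t : Fin T) : Fin T → ℝ :=
  fun k => if k ≤ t then d k else dlo

/-- Output of `pCR-PRM(π)` at slot `t`:
`δ_t(π, d) = [d_t − max_{k∈[t]} d_k + σ(d^t)/π]⁺`. -/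
noncomputable def pcr {T : ℕ} (c dmax dlo : ℝ) (π : ℝ) (d : Fin T → ℝ) (t : Fin T) : ℝ :=
  max (d t - prefMax d t + offOpt c dmax (ref dlo d t) / π) 0

/-- Inventory function `Φ(π) = sup_{d ∈ D} ∑_t δ_t(π, d)`. -/
noncomputable def Phi (T : ℕ) (c dmax dlo dhi : ℝ) (π : ℝ) : ℝ :=
  sSup {s | ∃ d : Fin T → ℝ, inD dlo dhi d ∧ s = ∑ t, pcr c dmax dlo π d t}

section

variable {T : ℕ}

lemma feasible_zero {c dmax : ℝ} {d : Fin T → ℝ} (hc : 0 ≤ c) (hdmax : 0 ≤ dmax)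
    (hd : ∀ j, 0 ≤ d j) : Feasible c dmax d 0 :=
  ⟨by simpa using hc, fun j => ⟨le_rfl, le_min hdmax (hd j)⟩⟩

lemma Red_le_of_feasible [Nonempty (Fin T)] {c dmax : ℝ} {d δ : Fin T → ℝ}
    (hδ : Feasible c dmax d δ) : Red d δ ≤ dmax := by
  have hsup : (⨆ t, d t) ≤ (⨆ t, (d t - δ t)) + dmax := by
    refine ciSup_le fun j => ?_
    have hδj : δ j ≤ dmax := (hδ.2 j).2.trans (min_le_left _ _)
    have hj : d j - δ j ≤ ⨆ t, (d t - δ t) :=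
      le_ciSup (f := fun t => d t - δ t) (Finite.bddAbove_range _) j
    linarith
  rw [Red]
  linarith

lemma Red_le_offOpt [Nonempty (Fin T)] {c dmax : ℝ} {d δ : Fin T → ℝ}
    (hδ : Feasible c dmax d δ) : Red d δ ≤ offOpt c dmax d :=
  le_csSup ⟨dmax, by rintro r ⟨δ', hδ', rfl⟩; exact Red_le_of_feasible hδ'⟩ ⟨δ, hδ, rfl⟩

lemma offOpt_le_offOpt_add_iSup_sub [Nonempty (Fin T)] {c dmax : ℝ} (hc : 0 ≤ c)
    (hdmax : 0 ≤ dmax) {d₁ d₂ : Fin T → ℝ} (hd₁ : ∀ j, 0 ≤ d₁ j) (hd : d₁ ≤ d₂) :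
    offOpt c dmax d₂ ≤ offOpt c dmax d₁ + ((⨆ j, d₂ j) - ⨆ j, d₁ j) := by
  refine csSup_le ⟨0, 0, feasible_zero hc hdmax fun j => (hd₁ j).trans (hd j), by simp [Red]⟩ ?_
  rintro r ⟨δ, hδ, rfl⟩
  set δ' : Fin T → ℝ := fun j => min (δ j) (d₁ j)
  have hδ' : Feasible c dmax d₁ δ' := by
    refine ⟨(Finset.sum_le_sum fun j _ => min_le_left _ _).trans hδ.1, fun j => ⟨?_, ?_⟩⟩
    · exact le_min (hδ.2 j).1 (hd₁ j)
    · exact min_le_min ((hδ.2 j).2.trans (min_le_left _ _)) le_rfl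
  have hnet : ∀ j, d₁ j - δ' j ≤ d₂ j - δ j := by
    intro j
    have := hd j
    have := (hδ.2 j).2.trans (min_le_right _ _)
    rcases le_total (δ j) (d₁ j) with h | h
    · simp only [δ', min_eq_left h]; linarith
    · simp only [δ', min_eq_right h]; linarith
  have hpeak : (⨆ j, (d₁ j - δ' j)) ≤ ⨆ j, (d₂ j - δ j) :=
    ciSup_le fun j => (hnet j).trans
      (le_ciSup (f := fun j => d₂ j - δ j) (Finite.bddAbove_range _) j)
  have hopt := Red_le_offOpt hδ'
  rw [Red] at hopt ⊢
  linarith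

lemma prefMax_mono {d : Fin T → ℝ} {k t : Fin T} (hkt : k ≤ t) : prefMax d k ≤ prefMax d t :=
  have : Nonempty {j : Fin T // j ≤ k} := ⟨⟨k, le_rfl⟩⟩
  ciSup_le fun j => le_ciSup (f := fun j : {j : Fin T // j ≤ t} => d j.1)
    (Finite.bddAbove_range _) ⟨j.1, j.2.trans hkt⟩

lemma iSup_ref {dlo : ℝ} {d : Fin T → ℝ} {s : Fin T} (hs : dlo ≤ d s) :
    (⨆ j, ref dlo d s j) = prefMax d s := by
  have : Nonempty (Fin T) := ⟨s⟩
  have : Nonempty {k : Fin T // k ≤ s} := ⟨⟨s, le_rfl⟩⟩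
  have hle : ∀ k (hk : k ≤ s), d k ≤ prefMax d s := fun k hk =>
    le_ciSup (f := fun k : {k : Fin T // k ≤ s} => d k.1) (Finite.bddAbove_range _) ⟨k, hk⟩
  apply le_antisymm
  · refine ciSup_le fun j => ?_
    by_cases h : j ≤ s
    · simpa only [ref, if_pos h] using hle j h
    · simpa only [ref, if_neg h] using hs.trans (hle s le_rfl)
  · refine ciSup_le fun k => ?_
    have hk : ref dlo d s k.1 = d k.1 := if_pos k.2
    exact hk ▸ le_ciSup (f := ref dlo d s) (Finite.bddAbove_range _) k.1

lemma ref_mono {dlo : ℝ} {d : Fin T → ℝ} (hd : ∀ j, dlo ≤ d j) {k t : Fin T} (hkt : k ≤ t) :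
    ref dlo d k ≤ ref dlo d t := by
  intro j
  by_cases hjk : j ≤ k
  · simp [ref, hjk, hjk.trans hkt]
  · by_cases hjt : j ≤ t
    · simpa [ref, hjk, hjt] using hd j
    · simp [ref, hjk, hjt]

lemma offOpt_ref_sub_le {c dmax dlo : ℝ} (hc : 0 ≤ c) (hdmax : 0 ≤ dmax) (hdlo : 0 ≤ dlo)
    {d : Fin T → ℝ} (hd : ∀ j, dlo ≤ d j) {k t : Fin T} (hkt : k ≤ t) :
    offOpt c dmax (ref dlo d t) - offOpt c dmax (ref dlo d k) ≤ prefMax d t - prefMax d k := by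
  have : Nonempty (Fin T) := ⟨t⟩
  have hnonneg : ∀ j, 0 ≤ ref dlo d k j := fun j => by
    unfold ref; split_ifs
    exacts [hdlo.trans (hd j), hdlo]
  have h := offOpt_le_offOpt_add_iSup_sub hc hdmax hnonneg (ref_mono hd hkt)
  rw [iSup_ref (hd k), iSup_ref (hd t)] at h
  linarith

lemma sub_pcr_le (c dmax dlo π : ℝ) (d : Fin T → ℝ) (k : Fin T) :
    d k - pcr c dmax dlo π d k ≤ prefMax d k - offOpt c dmax (ref dlo d k) / π := by
  have := le_max_left (d k - prefMax d k + offOpt c dmax (ref dlo d k) / π) 0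
  rw [pcr]
  linarith

end

theorem stmt7_general (T : ℕ) (c dmax dlo dhi : ℝ)
    (hc : 0 < c) (hdmax : 0 < dmax) (hdlo : 0 < dlo)
    (π : ℝ) (hπ : 1 ≤ π) (d : Fin T → ℝ) (hd : inD dlo dhi d) (t : Fin T) :
    prefMax d t - (⨆ k : {k : Fin T // k ≤ t}, (d k.1 - pcr c dmax dlo π d k.1)) ≥
      offOpt c dmax (ref dlo d t) / π := by
  have : Nonempty {k : Fin T // k ≤ t} := ⟨⟨t, le_rfl⟩⟩
  rw [ge_iff_le, le_sub_comm]
  refine ciSup_le fun ⟨k, hkt⟩ => (sub_pcr_le c dmax dlo π d k).trans ?_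
  have hσ := offOpt_ref_sub_le hc.le hdmax.le hdlo.le (fun j => (hd j).1) hkt
  have hM := prefMax_mono (d := d) hkt
  have hdiv : (offOpt c dmax (ref dlo d t) - offOpt c dmax (ref dlo d k)) / π ≤
      prefMax d t - prefMax d k := by
    rw [div_le_iff₀ (by linarith)]
    nlinarith
  rw [sub_div] at hdiv
  linarith

/-- `pCR-PRM(π)` maintains, at every slot `t`,
`max_{k∈[t]} d_k − max_{k∈[t]} (d_k − δ_k(π,d)) ≥ σ(d^t)/π`. -/
theorem stmt7 (T : ℕ) (hT : 0 < T) (c dmax dlo dhi : ℝ)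
    (hc : 0 < c) (hdmax : 0 < dmax) (hdlo : 0 < dlo) (hbd : dlo ≤ dhi)
    (π : ℝ) (hπ : 1 ≤ π) (d : Fin T → ℝ) (hd : inD dlo dhi d) (t : Fin T) :
    prefMax d t - (⨆ k : {k : Fin T // k ≤ t}, (d k.1 - pcr c dmax dlo π d k.1)) ≥
      offOpt c dmax (ref dlo d t) / π :=
  stmt7_general T c dmax dlo dhi hc hdmax hdlo π hπ d hd t
end
end

section
/- For every π ≥ 1, the following are equivalent: (i) for every d ∈ D the output vector (δ_1(π,d), …, δ_T(π,d)) of pCR-PRM(π) is a feasible discharging vector for d; (ii) Φ(π) ≤ c. -/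
open Finset MeasureTheory

noncomputable section

variable {T : ℕ} {c dmax dlo π : ℝ}

lemma le_prefMax (d : Fin T → ℝ) {k t : Fin T} (hk : k ≤ t) : d k ≤ prefMax d t :=
  le_ciSup (f := fun k : {k : Fin T // k ≤ t} => d k.1) (Set.finite_range _).bddAbove ⟨k, hk⟩

lemma offOpt_le_of_forall_red_le {d : Fin T → ℝ} {M : ℝ} (hM : 0 ≤ M)
    (h : ∀ δ, Feasible c dmax d δ → Red d δ ≤ M) : offOpt c dmax d ≤ M :=
  Real.sSup_le (by rintro r ⟨δ, hδ, rfl⟩; exact h δ hδ) hM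

lemma red_le_of_forall_le [Nonempty (Fin T)] {d δ : Fin T → ℝ} {b : ℝ} (h : ∀ t, δ t ≤ b) :
    Red d δ ≤ b := by
  have hmax : (⨆ t, d t) ≤ b + ⨆ t, (d t - δ t) := ciSup_le fun t => by
    have := le_ciSup (f := fun t => d t - δ t) (Set.finite_range _).bddAbove t
    linarith [h t]
  rw [Red]
  linarith

lemma red_le_iSup {d δ : Fin T → ℝ} {t₀ : Fin T} (h : δ t₀ ≤ d t₀) : Red d δ ≤ ⨆ t, d t := by
  have := le_ciSup (f := fun t => d t - δ t) (Set.finite_range _).bddAbove t₀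
  rw [Red]
  linarith

lemma offOpt_le_dmax [Nonempty (Fin T)] (hdmax : 0 ≤ dmax) (d : Fin T → ℝ) :
    offOpt c dmax d ≤ dmax :=
  offOpt_le_of_forall_red_le hdmax fun _ hδ =>
    red_le_of_forall_le fun t => (hδ.2 t).2.trans (min_le_left _ _)

lemma offOpt_le_iSup {d : Fin T → ℝ} {t₀ : Fin T} (hd : ∀ t, 0 ≤ d t) :
    offOpt c dmax d ≤ ⨆ t, d t :=
  offOpt_le_of_forall_red_le
    ((hd t₀).trans (le_ciSup (Set.finite_range _).bddAbove t₀)) fun _ hδ =>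
    red_le_iSup ((hδ.2 t₀).2.trans (min_le_right _ _))

lemma iSup_ref_le_prefMax {d : Fin T → ℝ} (hd : ∀ k, dlo ≤ d k) (t : Fin T) :
    (⨆ k, ref dlo d t k) ≤ prefMax d t := by
  have : Nonempty (Fin T) := ⟨t⟩
  refine ciSup_le fun k => ?_
  unfold ref
  split_ifs with hk
  · exact le_prefMax d hk
  · exact (hd t).trans (le_prefMax d le_rfl)

private lemma div_le_of_le_of_one_le {a M : ℝ} (ha : a ≤ M) (hM : 0 ≤ M) (hπ : 1 ≤ π) :
    a / π ≤ M := by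
  rw [div_le_iff₀ (zero_lt_one.trans_le hπ)]
  nlinarith

lemma pcr_le_dmax (hdmax : 0 ≤ dmax) (hπ : 1 ≤ π) (d : Fin T → ℝ) (t : Fin T) :
    pcr c dmax dlo π d t ≤ dmax := by
  have : Nonempty (Fin T) := ⟨t⟩
  have hσ := div_le_of_le_of_one_le (offOpt_le_dmax (c := c) hdmax (ref dlo d t)) hdmax hπ
  exact max_le (by linarith [le_prefMax d (le_refl t)]) hdmax

lemma pcr_le_self (hdlo : 0 ≤ dlo) (hπ : 1 ≤ π) {d : Fin T → ℝ} (hd : ∀ k, dlo ≤ d k)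
    (t : Fin T) : pcr c dmax dlo π d t ≤ d t := by
  have hdt : d t ≤ prefMax d t := le_prefMax d le_rfl
  have href : ∀ k, 0 ≤ ref dlo d t k := fun k => by
    unfold ref
    split_ifs
    exacts [hdlo.trans (hd k), hdlo]
  have hσ : offOpt c dmax (ref dlo d t) ≤ prefMax d t :=
    (offOpt_le_iSup (t₀ := t) href).trans (iSup_ref_le_prefMax hd t)
  have := div_le_of_le_of_one_le hσ (hdlo.trans ((hd t).trans hdt)) hπ
  exact max_le (by linarith) (hdlo.trans (hd t))

/-- The per-slot constraints hold automatically, so only the capacity constraint can fail. -/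
lemma feasible_pcr_iff (hdmax : 0 ≤ dmax) (hdlo : 0 ≤ dlo) (hπ : 1 ≤ π) {d : Fin T → ℝ}
    (hd : ∀ k, dlo ≤ d k) :
    Feasible c dmax d (pcr c dmax dlo π d) ↔ ∑ t, pcr c dmax dlo π d t ≤ c :=
  and_iff_left fun t =>
    ⟨le_max_right _ _, le_min (pcr_le_dmax hdmax hπ d t) (pcr_le_self hdlo hπ hd t)⟩

lemma bddAbove_sum_pcr (hdmax : 0 ≤ dmax) (hπ : 1 ≤ π) (dhi : ℝ) :
    BddAbove {s | ∃ d : Fin T → ℝ, inD dlo dhi d ∧ s = ∑ t, pcr c dmax dlo π d t} := by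
  refine ⟨∑ _t : Fin T, dmax, ?_⟩
  rintro s ⟨d, -, rfl⟩
  exact Finset.sum_le_sum fun t _ => pcr_le_dmax hdmax hπ d t

theorem stmt8_general (T : ℕ) (c dmax dlo dhi : ℝ)
    (hc : 0 < c) (hdmax : 0 < dmax) (hdlo : 0 < dlo)
    (π : ℝ) (hπ : 1 ≤ π) :
    (∀ d : Fin T → ℝ, inD dlo dhi d → Feasible c dmax d (pcr c dmax dlo π d)) ↔
      Phi T c dmax dlo dhi π ≤ c := by
  constructor
  · intro hfeas
    refine Real.sSup_le ?_ hc.le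
    rintro s ⟨d, hd, rfl⟩
    exact (hfeas d hd).1
  · intro hΦ d hd
    rw [feasible_pcr_iff hdmax.le hdlo.le hπ fun k => (hd k).1]
    exact (le_csSup (bddAbove_sum_pcr hdmax.le hπ dhi) ⟨d, hd, rfl⟩).trans hΦ

/-- `pCR-PRM(π)` is feasible (for every `d ∈ D`) iff `Φ(π) ≤ c`. -/
theorem stmt8 (T : ℕ) (hT : 0 < T) (c dmax dlo dhi : ℝ)
    (hc : 0 < c) (hdmax : 0 < dmax) (hdlo : 0 < dlo) (hbd : dlo ≤ dhi)
    (π : ℝ) (hπ : 1 ≤ π) :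
    (∀ d : Fin T → ℝ, inD dlo dhi d → Feasible c dmax d (pcr c dmax dlo π d)) ↔
      Phi T c dmax dlo dhi π ≤ c :=
  stmt8_general T c dmax dlo dhi hc hdmax hdlo π hπ
end
end
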